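/- arXiv:1405.1400 — 2 statements merged into one kernel-verified Lean document; each statement's English description precedes it below -/
import Mathlib

section
/- In the Gaussian autocorrelation model, the signal-to-noise ratio SNR(γ) = c · ((γ² + ν²)/(γ² + b²)²)^{N/4} (with c > 0, b > 0, ν ≥ 0 fixed) is maximized over γ ≥ 0 at γ = √(b² − 2ν²) when ν < b/√2, and at γ = 0 when ν > b/√2. -/
open Real

/-- Signal-to-noise ratio in the Gaussian autocorrelation model. -/
noncomputable def SNR (c b ν : ℝ) (N : ℕ) (γ : ℝ) : ℝ :=
  c * ((γ ^ 2 + ν ^ 2) / (γ ^ 2 + b ^ 2) ^ 2) ^ ((N : ℝ) / 4)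

lemma snr_mono (c b ν : ℝ) (N : ℕ) (hc : 0 < c) (x y : ℝ)
    (hx : 0 ≤ (x ^ 2 + ν ^ 2) / (x ^ 2 + b ^ 2) ^ 2)
    (h : (x ^ 2 + ν ^ 2) / (x ^ 2 + b ^ 2) ^ 2 ≤ (y ^ 2 + ν ^ 2) / (y ^ 2 + b ^ 2) ^ 2) :
    SNR c b ν N x ≤ SNR c b ν N y := by
  unfold SNR
  exact mul_le_mul_of_nonneg_left (Real.rpow_le_rpow hx h (by positivity)) hc.le

theorem stmt_2 (c b ν : ℝ) (N : ℕ) (hN : 0 < N)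
    (hc : 0 < c) (hb : 0 < b) (hν : 0 ≤ ν) :
    (ν < b / Real.sqrt 2 →
      ∀ γ, 0 ≤ γ → SNR c b ν N γ ≤ SNR c b ν N (Real.sqrt (b ^ 2 - 2 * ν ^ 2))) ∧
    (ν > b / Real.sqrt 2 →
      ∀ γ, 0 ≤ γ → SNR c b ν N γ ≤ SNR c b ν N 0) := by
  have hs2 : (0:ℝ) < Real.sqrt 2 := Real.sqrt_pos.mpr (by norm_num)
  have hsq2 : (Real.sqrt 2) ^ 2 = 2 := Real.sq_sqrt (by norm_num)
  constructor
  · intro hlt γ hγ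
    have hmul : ν * Real.sqrt 2 < b := (lt_div_iff₀ hs2).mp hlt
    have h2 : 2 * ν ^ 2 < b ^ 2 := by
      have := pow_lt_pow_left₀ hmul (by positivity : (0:ℝ) ≤ ν * Real.sqrt 2) two_ne_zero
      nlinarith
    have hs : Real.sqrt (b ^ 2 - 2 * ν ^ 2) ^ 2 = b ^ 2 - 2 * ν ^ 2 :=
      Real.sq_sqrt (by linarith)
    apply snr_mono c b ν N hc
    · positivity
    · rw [hs]
      rw [div_le_div_iff₀ (by positivity) (by nlinarith)]
      nlinarith [sq_nonneg (γ ^ 2 - (b ^ 2 - 2 * ν ^ 2)), sq_nonneg γ, sq_nonneg ν]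
  · intro hgt γ hγ
    have hmul : b < ν * Real.sqrt 2 := (div_lt_iff₀ hs2).mp hgt
    have h2 : b ^ 2 < 2 * ν ^ 2 := by
      have := pow_lt_pow_left₀ hmul hb.le two_ne_zero
      nlinarith
    apply snr_mono c b ν N hc
    · positivity
    · rw [div_le_div_iff₀ (by positivity) (by positivity)]
      nlinarith [sq_nonneg γ, sq_nonneg (γ * b), sq_nonneg (γ * ν), sq_nonneg (b * ν)]
end

section
/- FDR bound decomposition: for nonnegative integer-valued random variables V and W with J ≥ 1 a fixed integer, E[V/((V+W) ∨ 1)] ≤ P(W ≤ J−1) + E[V]/(E[V] + J), provided V and W are independent and V/( V+J) is the evaluation under W = J. -/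
/-!
Off the event `W ≤ J - 1` we have `V + W ≥ V + J ≥ 1`, so `V / max (V + W) 1 ≤ V / (V + J)`;
on that event the integrand is at most `1`. It remains to bound `E[V / (V + J)]`, which is
Jensen's inequality for the concave function `x ↦ x / (x + J) = 1 - J / (x + J)` on `[0, ∞)`.
-/

open MeasureTheory ProbabilityTheory Set

theorem concaveOn_div_add_const {c : ℝ} (hc : 0 < c) :
    ConcaveOn ℝ (Ici 0) fun x : ℝ => x / (x + c) := by
  have hinv : ConvexOn ℝ (Ici 0) fun x : ℝ => c * (x + c) ^ (-1 : ℤ) :=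
    (((convexOn_zpow (-1)).translate_left c).subset
      (fun x (hx : 0 ≤ x) => show 0 < c + x by linarith) (convex_Ici 0)).smul hc.le
  refine (hinv.neg.add_const 1).congr fun x (hx : 0 ≤ x) => ?_
  have : x + c ≠ 0 := by linarith
  simp only [Pi.add_apply, Pi.neg_apply, zpow_neg_one]
  field_simp
  ring

theorem norm_div_add_const_le_one {x c : ℝ} (hx : 0 ≤ x) (hc : 0 < c) :
    ‖x / (x + c)‖ ≤ 1 := by
  rw [Real.norm_of_nonneg (by positivity)]
  exact div_le_one_of_le₀ (by linarith) (by linarith)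

theorem div_max_add_one_le_one {x y : ℝ} (hy : 0 ≤ y) : x / max (x + y) 1 ≤ 1 :=
  div_le_one_of_le₀ (le_max_of_le_left (by linarith)) (zero_le_one.trans (le_max_right _ _))

theorem Nat.cast_div_max_add_le_indicator_add (v w J : ℕ) (hJ : 1 ≤ J) :
    (v : ℝ) / max ((v : ℝ) + w) 1 ≤ {n : ℕ | n ≤ J - 1}.indicator 1 w + v / (v + J) := by
  by_cases hw : w ≤ J - 1
  · rw [indicator_of_mem (show w ∈ {n : ℕ | n ≤ J - 1} from hw), Pi.one_apply]
    linarith [div_max_add_one_le_one (x := v) w.cast_nonneg,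
      show (0 : ℝ) ≤ v / (v + J) by positivity]
  · have hJw : (J : ℝ) ≤ w := by exact_mod_cast (by omega : J ≤ w)
    have hJ' : (1 : ℝ) ≤ J := by exact_mod_cast hJ
    rw [indicator_of_notMem (show w ∉ {n : ℕ | n ≤ J - 1} from hw), zero_add,
      max_eq_left (by linarith [v.cast_nonneg (α := ℝ)])]
    gcongr

section

variable {Ω : Type*} [MeasurableSpace Ω] {μ : Measure Ω}

theorem integral_div_add_const_le [IsProbabilityMeasure μ] {X : Ω → ℝ} (hX : Integrable X μ)
    (hX₀ : ∀ᵐ ω ∂μ, 0 ≤ X ω) {c : ℝ} (hc : 0 < c) :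
    ∫ ω, X ω / (X ω + c) ∂μ ≤ (∫ ω, X ω ∂μ) / ((∫ ω, X ω ∂μ) + c) := by
  have hint : Integrable (fun ω => X ω / (X ω + c)) μ :=
    .of_bound (hX.aemeasurable.div (hX.aemeasurable.add_const c)).aestronglyMeasurable 1
      (hX₀.mono fun ω hω => norm_div_add_const_le_one hω hc)
  have hcont : ContinuousOn (fun x : ℝ => x / (x + c)) (Ici 0) :=
    continuousOn_id.div (continuousOn_id.add continuousOn_const)
      fun x (hx : 0 ≤ x) => by positivity
  exact (concaveOn_div_add_const hc).le_map_integral hcont isClosed_Ici hX₀ hX hint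

theorem integral_div_max_add_le [IsFiniteMeasure μ] {V W : Ω → ℕ} (hV : Measurable V)
    (hW : Measurable W) {J : ℕ} (hJ : 1 ≤ J) :
    ∫ ω, (V ω : ℝ) / max ((V ω : ℝ) + W ω) 1 ∂μ ≤
      μ.real {ω | W ω ≤ J - 1} + ∫ ω, (V ω : ℝ) / (V ω + J) ∂μ := by
  have hJ' : (0 : ℝ) < J := by exact_mod_cast hJ
  have hA : MeasurableSet {ω | W ω ≤ J - 1} := hW measurableSet_Iic
  have hf : Integrable (fun ω => (V ω : ℝ) / max ((V ω : ℝ) + W ω) 1) μ := by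
    refine .of_bound (by fun_prop : Measurable _).aestronglyMeasurable 1 (ae_of_all _ fun ω => ?_)
    rw [Real.norm_of_nonneg (by positivity)]
    exact div_max_add_one_le_one (W ω).cast_nonneg
  have hind : Integrable ({ω | W ω ≤ J - 1}.indicator (1 : Ω → ℝ)) μ :=
    (integrable_const 1).indicator hA
  have hg : Integrable (fun ω => (V ω : ℝ) / (V ω + J)) μ :=
    .of_bound (by fun_prop : Measurable _).aestronglyMeasurable 1
      (ae_of_all _ fun ω => norm_div_add_const_le_one (V ω).cast_nonneg hJ')
  calc ∫ ω, (V ω : ℝ) / max ((V ω : ℝ) + W ω) 1 ∂μ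
      ≤ ∫ ω, ({ω | W ω ≤ J - 1}.indicator (1 : Ω → ℝ) ω + (V ω : ℝ) / (V ω + J)) ∂μ :=
        integral_mono hf (hind.add hg)
          fun ω => Nat.cast_div_max_add_le_indicator_add (V ω) (W ω) J hJ
    _ = μ.real {ω | W ω ≤ J - 1} + ∫ ω, (V ω : ℝ) / (V ω + J) ∂μ := by
        rw [integral_add hind hg, integral_indicator_one hA]

end

theorem stmt_13_general {Ω : Type*} [MeasurableSpace Ω] (μ : Measure Ω) [IsProbabilityMeasure μ]
    (V W : Ω → ℕ) (hVm : Measurable V) (hWm : Measurable W)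
    (J : ℕ) (hJ : 1 ≤ J)
    (hVi : Integrable (fun ω => (V ω : ℝ)) μ) :
    (∫ ω, (V ω : ℝ) / max ((V ω : ℝ) + (W ω : ℝ)) 1 ∂μ) ≤
      (μ {ω | W ω ≤ J - 1}).toReal +
        (∫ ω, (V ω : ℝ) ∂μ) / ((∫ ω, (V ω : ℝ) ∂μ) + J) := by
  have hJ' : (0 : ℝ) < J := by exact_mod_cast hJ
  calc (∫ ω, (V ω : ℝ) / max ((V ω : ℝ) + (W ω : ℝ)) 1 ∂μ)
      ≤ μ.real {ω | W ω ≤ J - 1} + ∫ ω, (V ω : ℝ) / (V ω + J) ∂μ :=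
        integral_div_max_add_le hVm hWm hJ
    _ ≤ (μ {ω | W ω ≤ J - 1}).toReal +
          (∫ ω, (V ω : ℝ) ∂μ) / ((∫ ω, (V ω : ℝ) ∂μ) + J) :=
        add_le_add le_rfl
          (integral_div_add_const_le hVi (ae_of_all _ fun ω => (V ω).cast_nonneg) hJ')

theorem stmt_13 {Ω : Type*} [MeasurableSpace Ω] (μ : Measure Ω) [IsProbabilityMeasure μ]
    (V W : Ω → ℕ) (hVm : Measurable V) (hWm : Measurable W)
    (hindep : IndepFun V W μ) (J : ℕ) (hJ : 1 ≤ J)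
    (hVi : Integrable (fun ω => (V ω : ℝ)) μ) :
    (∫ ω, (V ω : ℝ) / max ((V ω : ℝ) + (W ω : ℝ)) 1 ∂μ) ≤
      (μ {ω | W ω ≤ J - 1}).toReal +
        (∫ ω, (V ω : ℝ) ∂μ) / ((∫ ω, (V ω : ℝ) ∂μ) + J) :=
  stmt_13_general μ V W hVm hWm J hJ hVi
end
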